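/- Let μ be a d-regular measure on a Hilbert space H. There exist constants 0 < δ_μ < 1 and ω_μ > 0 depending only on d and C_μ such that for every x ∈ supp(μ) and 0 < t ≤ diam(supp(μ)), there are points x₀, …, x_{d+1} ∈ supp(μ) with B(x_i, δ_μ·t) ⊆ B(x,t) for all i, and such that for every choice of points x̃_i ∈ B(x_i, δ_μ·t) (i = 0,…,d+1) and every 0 ≤ j ≤ d+1, the d-content of the d+2 points with the j-th omitted satisfies M_d(x̃₀,…,x̂̃_j,…,x̃_{d+1}) ≥ ω_μ · t^d. -/

import Mathlib

/-!
The vertices are chosen one at a time in `B(x, t/2) ∩ supp μ`, each at distance more than `ρ t`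
from the affine spans of the at most `d` earlier vertices that precede it in a common face. Such a
point exists: a `(d-1)`-dimensional affine subspace is covered, inside `B(x, 2t)`, by
`O(ρ^(1-d))` balls of radius `2ρt`, so by upper regularity its `ρt`-neighbourhood in `B(x, t)` has
measure `O(ρ t^d)`; for small `ρ` even `d + 1` of these neighbourhoods cannot exhaust the measure
`≥ C⁻¹ (t/2)^d` of `B(x, t/2)`. In each face the edge vectors are then successively `ρt`-far from
the span of the previous ones, so the Gram determinant, the product of the squared Gram–Schmidt
norms, is at least `(ρt)^(2d)`. Since the determinant is Lipschitz on bounded sets of matrices, it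
stays above `(ρt)^(2d)/4` when every vertex is moved by at most `δt`, `δ` small in terms of `ρ`.
-/

open MeasureTheory Metric Finset

noncomputable section

/-- n! times the n-volume of the simplex on y₀,…,y_n (Gram determinant form). -/
def simplexContent {H : Type*} [NormedAddCommGroup H] [InnerProductSpace ℝ H]
    (n : ℕ) (y : Fin (n + 1) → H) : ℝ :=
  Real.sqrt (Matrix.det (Matrix.of fun i j : Fin n =>
    (inner ℝ (y i.succ - y 0) (y j.succ - y 0) : ℝ)))

def msupport {H : Type*} [MetricSpace H] [MeasurableSpace H] (μ : Measure H) : Set H :=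
  {x | ∀ r : ℝ, 0 < r → 0 < μ (closedBall x r)}

def IsDRegular {H : Type*} [MetricSpace H] [MeasurableSpace H] (d : ℕ) (Cμ : ℝ)
    (μ : Measure H) : Prop :=
  1 ≤ Cμ ∧ ∀ x ∈ msupport μ, ∀ t : ℝ, 0 < t →
    ENNReal.ofReal t ≤ EMetric.diam (msupport μ) →
      ENNReal.ofReal (Cμ⁻¹ * t ^ d) ≤ μ (closedBall x t) ∧
        μ (closedBall x t) ≤ ENNReal.ofReal (Cμ * t ^ d)

open scoped ENNReal NNReal Nat RealInnerProductSpace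

section Packing

variable {E : Type*} [NormedAddCommGroup E] [NormedSpace ℝ E]

theorem Finset.card_le_of_isSeparated_of_subset_closedBall [FiniteDimensional ℝ E]
    {F : Finset E} {c : E} {R : ℝ} {ε : ℝ≥0} (hε : 0 < ε) (hR : 0 ≤ R)
    (hF : ↑F ⊆ closedBall c R) (hsep : IsSeparated ε (F : Set E)) :
    (F.card : ℝ) ≤ ((2 * R + ε) / ε) ^ Module.finrank ℝ E := by
  borelize E
  set μ : Measure E := Measure.addHaar
  have hr : (0 : ℝ) < ε / 2 := by positivity
  have hdisj : (F : Set E).PairwiseDisjoint (closedBall · (ε / 2)) := by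
    intro a ha b hb hab
    have hab' : (ε : ℝ≥0∞) < edist a b := hsep ha hb hab
    rw [edist_nndist, ENNReal.coe_lt_coe] at hab'
    have : (ε : ℝ) < dist a b := hab'
    exact closedBall_disjoint_closedBall (by linarith)
  have hsub : (⋃ w ∈ F, closedBall w (ε / 2)) ⊆ closedBall c (R + ε / 2) :=
    Set.iUnion₂_subset fun w hw =>
      closedBall_subset_closedBall' (by linarith [mem_closedBall.1 (hF hw)])
  have hvol := measure_mono (μ := μ) hsub
  rw [measure_biUnion_finset hdisj fun _ _ => measurableSet_closedBall] at hvol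
  simp only [Measure.addHaar_closedBall μ _ hr.le, Finset.sum_const, nsmul_eq_mul,
    Measure.addHaar_closedBall μ _ (by positivity : 0 ≤ R + ε / 2), ← mul_assoc] at hvol
  have hcard := (ENNReal.mul_le_mul_iff_left (measure_ball_pos μ 0 one_pos).ne'
    measure_ball_lt_top.ne).1 hvol
  rw [← ENNReal.ofReal_natCast, ← ENNReal.ofReal_mul (by positivity),
    ENNReal.ofReal_le_ofReal_iff (by positivity)] at hcard
  rw [div_pow, le_div_iff₀ (by positivity)]
  calc (F.card : ℝ) * (ε : ℝ) ^ Module.finrank ℝ E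
      = 2 ^ Module.finrank ℝ E * (F.card * (ε / 2 : ℝ) ^ Module.finrank ℝ E) := by
        rw [div_pow]; field_simp
    _ ≤ 2 ^ Module.finrank ℝ E * (R + ε / 2) ^ Module.finrank ℝ E := by gcongr
    _ = (2 * R + ε) ^ Module.finrank ℝ E := by rw [← mul_pow]; ring

theorem exists_finset_dist_le_of_subset_closedBall [FiniteDimensional ℝ E] {K : Set E}
    {c : E} {R ε : ℝ} (hε : 0 < ε) (hR : 0 ≤ R) (hK : K ⊆ closedBall c R) :
    ∃ F : Finset E, ↑F ⊆ K ∧ (F.card : ℝ) ≤ ((2 * R + ε) / ε) ^ Module.finrank ℝ E ∧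
      ∀ y ∈ K, ∃ f ∈ F, dist y f ≤ ε := by
  lift ε to ℝ≥0 using hε.le
  replace hε : 0 < ε := by exact_mod_cast hε
  set N := ⌊((2 * R + ε) / ε) ^ Module.finrank ℝ E⌋₊
  have hsep : ∀ C ⊆ K, IsSeparated ε C → C.encard ≤ N := by
    intro C hCK hC
    by_contra! hlt
    obtain ⟨C', hC'C, hC'card⟩ := Set.exists_subset_encard_eq (Order.add_one_le_of_lt hlt)
    have hfin : C'.Finite := Set.finite_of_encard_eq_coe hC'card
    have hle := Finset.card_le_of_isSeparated_of_subset_closedBall (F := hfin.toFinset) hε hR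
      (by simpa using hC'C.trans (hCK.trans hK)) (by simpa using hC.subset hC'C)
    have hncard : C'.ncard = N + 1 := by
      rw [Set.ncard_def, hC'card]; exact ENat.toNat_natCast (N + 1)
    rw [← Set.ncard_eq_toFinset_card C' hfin, hncard, Nat.cast_succ] at hle
    exact absurd hle (not_le.2 (Nat.lt_floor_add_one _))
  have hpack : packingNumber ε K ≤ N :=
    iSup_le fun C => iSup_le fun hCK => iSup_le fun hC => hsep C hCK hC
  have htop : packingNumber ε K ≠ ⊤ := ne_top_of_le_ne_top (by simp) hpack
  have hfin : (maximalSeparatedSet ε K).Finite := by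
    rw [← Set.encard_ne_top_iff, encard_maximalSeparatedSet htop]; exact htop
  refine ⟨hfin.toFinset, by simpa using maximalSeparatedSet_subset, ?_, fun y hy => ?_⟩
  · have hcard : (maximalSeparatedSet ε K).encard ≤ N :=
      (encard_maximalSeparatedSet htop).trans_le hpack
    rw [← Set.ncard_eq_toFinset_card _ hfin]
    refine le_trans (Nat.cast_le.2 ?_) (Nat.floor_le (by positivity))
    exact (Set.encard_le_coe_iff_finite_ncard_le.1 hcard).2
  · obtain ⟨f, hf, hyf⟩ := isCover_maximalSeparatedSet htop hy
    have hyf' : edist y f ≤ ε := hyf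
    rw [edist_nndist, ENNReal.coe_le_coe] at hyf'
    exact ⟨f, by simpa using hf, hyf'⟩

theorem AffineSubspace.exists_finset_dist_le (W : AffineSubspace ℝ E)
    [FiniteDimensional ℝ W.direction] (x : E) {R ε : ℝ} (hε : 0 < ε) (hR : 0 ≤ R) :
    ∃ F : Finset E, (F.card : ℝ) ≤ ((4 * R + ε) / ε) ^ Module.finrank ℝ W.direction ∧
      ∀ w ∈ W, dist w x ≤ R → ∃ f ∈ F, dist w f ≤ ε := by
  classical
  by_cases hK : ∃ w₁ ∈ W, dist w₁ x ≤ R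
  swap
  · simp only [not_exists, not_and, not_le] at hK
    exact ⟨∅, by simp; positivity, fun w hw hwx => absurd hwx (not_le.2 (hK w hw))⟩
  obtain ⟨w₁, hw₁, hw₁x⟩ := hK
  have hK₀ : {v : W.direction | dist ((v : E) + w₁) x ≤ R} ⊆ closedBall 0 (2 * R) := by
    intro v hv
    have hv' : dist ((v : E) + w₁) x ≤ R := hv
    rw [mem_closedBall, dist_zero_right, Submodule.coe_norm, ← dist_add_self_left w₁]
    linarith [dist_triangle_right ((v : E) + w₁) w₁ x]
  obtain ⟨F₀, -, hcard, hcover⟩ :=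
    exists_finset_dist_le_of_subset_closedBall hε (by positivity) hK₀
  refine ⟨F₀.image fun v : W.direction => (v : E) + w₁, ?_, fun w hw hwx => ?_⟩
  · refine le_trans (Nat.cast_le.2 Finset.card_image_le) ?_
    rwa [show 4 * R = 2 * (2 * R) by ring]
  · obtain ⟨f, hf, hwf⟩ :=
      hcover ⟨w - w₁, W.vsub_mem_direction hw hw₁⟩ (by simpa using hwx)
    refine ⟨f + w₁, Finset.mem_image.2 ⟨f, hf, rfl⟩, ?_⟩
    rw [Subtype.dist_eq] at hwf
    rwa [dist_eq_norm, ← sub_sub, sub_right_comm, ← dist_eq_norm]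

theorem AffineSubspace.exists_finset_cover_closedBall_inter_cthickening
    (W : AffineSubspace ℝ E) [FiniteDimensional ℝ W.direction] (x : E) {t r : ℝ} (hr : 0 < r)
    (hrt : 2 * r ≤ t) :
    ∃ F : Finset E, (F.card : ℝ) ≤ (4 * t / r + 1) ^ Module.finrank ℝ W.direction ∧
      closedBall x t ∩ cthickening r W ⊆ ⋃ f ∈ F, closedBall f (4 * r) := by
  obtain ⟨F, hFcard, hFnet⟩ :=
    W.exists_finset_dist_le x (R := 2 * t) (by positivity : 0 < 2 * r) (by linarith)
  refine ⟨F, ?_, ?_⟩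
  · convert hFcard using 2
    field_simp
  · rintro y ⟨hyx, hyW⟩
    obtain ⟨w, hwW, hyw⟩ : ∃ w ∈ W, edist y w < ENNReal.ofReal (2 * r) :=
      Metric.infEDist_lt_iff.1 ((mem_cthickening_iff.1 hyW).trans_lt
        ((ENNReal.ofReal_lt_ofReal_iff (by positivity)).2 (by linarith)))
    rw [edist_lt_ofReal] at hyw
    obtain ⟨f, hfF, hwf⟩ := hFnet w hwW
      (by linarith [dist_triangle_left w x y, mem_closedBall.1 hyx])
    exact Set.mem_biUnion hfF (by linarith [dist_triangle y w f] : dist y f ≤ 4 * r)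

end Packing

section Regular

variable {X : Type*} [MetricSpace X] [MeasurableSpace X] [SecondCountableTopology X]
  {μ : Measure X} {d : ℕ} {Cμ : ℝ}

theorem measure_compl_msupport (μ : Measure X) : μ (msupport μ)ᶜ = 0 := by
  refine measure_null_of_locally_null _ fun x hx => ?_
  obtain ⟨r, hr, hnull⟩ : ∃ r : ℝ, 0 < r ∧ μ (closedBall x r) ≤ 0 := by
    simpa [msupport] using hx
  exact ⟨closedBall x r, mem_nhdsWithin_of_mem_nhds (closedBall_mem_nhds x hr),
    nonpos_iff_eq_zero.1 hnull⟩

theorem IsDRegular.measure_closedBall_le (hreg : IsDRegular d Cμ μ) (y : X) {s : ℝ}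
    (hs : 0 < s) (hdiam : ENNReal.ofReal (2 * s) ≤ ediam (msupport μ)) :
    μ (closedBall y s) ≤ ENNReal.ofReal (Cμ * (2 * s) ^ d) := by
  by_cases hy : ∃ z ∈ msupport μ, dist y z ≤ s
  · obtain ⟨z, hz, hyz⟩ := hy
    calc μ (closedBall y s) ≤ μ (closedBall z (2 * s)) :=
          measure_mono (closedBall_subset_closedBall' (by linarith))
      _ ≤ _ := (hreg.2 z hz (2 * s) (by positivity) hdiam).2
  · push Not at hy
    have hsub : closedBall y s ⊆ (msupport μ)ᶜ := fun w hw hws =>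
      (hy w hws).not_ge (by rw [dist_comm]; exact hw)
    rw [measure_mono_null hsub (measure_compl_msupport μ)]
    exact zero_le

end Regular

section Escape

variable {H : Type*} [NormedAddCommGroup H] [NormedSpace ℝ H] [MeasurableSpace H]
  [SecondCountableTopology H] {μ : Measure H} {d : ℕ} {Cμ : ℝ}

theorem IsDRegular.measure_closedBall_inter_cthickening_le (hd : 1 ≤ d)
    (hreg : IsDRegular d Cμ μ) (x : H) {t ρ : ℝ} (ht : 0 < t)
    (hdiam : ENNReal.ofReal t ≤ ediam (msupport μ)) (hρ : 0 < ρ) (hρ8 : ρ ≤ 1 / 8)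
    (W : AffineSubspace ℝ H) [FiniteDimensional ℝ W.direction]
    (hW : Module.finrank ℝ W.direction ≤ d - 1) :
    μ (closedBall x t ∩ cthickening (ρ * t) W) ≤
      ENNReal.ofReal (5 ^ (d - 1) * 8 ^ d * Cμ * ρ * t ^ d) := by
  set r := ρ * t with hr
  have hr0 : 0 < r := mul_pos hρ ht
  have hrt : 8 * r ≤ t := by nlinarith
  obtain ⟨F, hFcard, hcover⟩ :=
    W.exists_finset_cover_closedBall_inter_cthickening x (t := t) hr0 (by linarith)
  have hcard : (F.card : ℝ) ≤ (5 / ρ) ^ (d - 1) := by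
    have hbase : 4 * t / r + 1 = 4 / ρ + 1 := by rw [hr]; field_simp
    have h1 : 1 ≤ 4 / ρ + 1 := by linarith [div_pos four_pos hρ]
    have h2 : 4 / ρ + 1 ≤ 5 / ρ := by
      rw [div_add_one hρ.ne', div_le_div_iff_of_pos_right hρ]; linarith
    calc (F.card : ℝ) ≤ (4 / ρ + 1) ^ Module.finrank ℝ W.direction := hbase ▸ hFcard
      _ ≤ (4 / ρ + 1) ^ (d - 1) := pow_le_pow_right₀ h1 hW
      _ ≤ (5 / ρ) ^ (d - 1) := by gcongr
  calc μ (closedBall x t ∩ cthickening r W)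
      ≤ ∑ f ∈ F, μ (closedBall f (4 * r)) :=
        (measure_mono hcover).trans (measure_biUnion_finset_le _ _)
    _ ≤ ∑ _f ∈ F, ENNReal.ofReal (Cμ * (8 * r) ^ d) := by
      refine Finset.sum_le_sum fun f _ => ?_
      have h8 : 2 * (4 * r) = 8 * r := by ring
      have := hreg.measure_closedBall_le f (s := 4 * r) (by positivity)
        ((ENNReal.ofReal_le_ofReal (by linarith)).trans hdiam)
      rwa [h8] at this
    _ = ENNReal.ofReal (F.card * (Cμ * (8 * r) ^ d)) := by
      rw [ENNReal.ofReal_mul (Nat.cast_nonneg _), ENNReal.ofReal_natCast, Finset.sum_const,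
        nsmul_eq_mul]
    _ ≤ _ := by
      have hC : 0 ≤ Cμ := zero_le_one.trans hreg.1
      obtain ⟨e, rfl⟩ : ∃ e, d = e + 1 := ⟨d - 1, by omega⟩
      refine ENNReal.ofReal_le_ofReal ?_
      calc (F.card : ℝ) * (Cμ * (8 * r) ^ (e + 1))
          ≤ (5 / ρ) ^ e * (Cμ * (8 * r) ^ (e + 1)) := by gcongr; simpa using hcard
        _ = 5 ^ (e + 1 - 1) * 8 ^ (e + 1) * Cμ * ρ * t ^ (e + 1) := by
          rw [hr, Nat.add_sub_cancel, div_pow]; field_simp; ring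

def escapeRadius (d : ℕ) (Cμ : ℝ) : ℝ :=
  min (1 / 8) (1 / (2 * ((d + 1) * 5 ^ (d - 1) * 8 ^ d * 2 ^ d * Cμ ^ 2)))

theorem escapeRadius_pos (hC : 1 ≤ Cμ) : 0 < escapeRadius d Cμ := by
  have : 0 < Cμ := by linarith
  exact lt_min (by norm_num) (by positivity)

theorem escapeRadius_le : escapeRadius d Cμ ≤ 1 / 8 := min_le_left _ _

theorem escapeRadius_mul_lt (hC : 1 ≤ Cμ) {t : ℝ} (ht : 0 < t) :
    (d + 1) * (5 ^ (d - 1) * 8 ^ d * Cμ * escapeRadius d Cμ * t ^ d) < Cμ⁻¹ * (t / 2) ^ d := by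
  set A : ℝ := (d + 1) * 5 ^ (d - 1) * 8 ^ d * 2 ^ d * Cμ ^ 2
  have hC0 : 0 < Cμ := by linarith
  have hA : 0 < A := by positivity
  have hAρ : A * escapeRadius d Cμ ≤ 1 / 2 :=
    calc A * escapeRadius d Cμ ≤ A * (1 / (2 * A)) := by gcongr; exact min_le_right _ _
      _ = 1 / 2 := by field_simp
  have hpos : 0 < Cμ⁻¹ * (t / 2) ^ d := by positivity
  calc (d + 1) * (5 ^ (d - 1) * 8 ^ d * Cμ * escapeRadius d Cμ * t ^ d)
      = A * escapeRadius d Cμ * (Cμ⁻¹ * (t / 2) ^ d) := by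
        simp only [A]; rw [div_pow]; field_simp
    _ ≤ 1 / 2 * (Cμ⁻¹ * (t / 2) ^ d) := by gcongr
    _ < Cμ⁻¹ * (t / 2) ^ d := by linarith

theorem IsDRegular.exists_mem_msupport_forall_lt_dist (hd : 1 ≤ d)
    (hreg : IsDRegular d Cμ μ) {x : H} (hx : x ∈ msupport μ) {t : ℝ} (ht : 0 < t)
    (hdiam : ENNReal.ofReal t ≤ ediam (msupport μ)) {ι : Type*} [Fintype ι]
    (hι : Fintype.card ι ≤ d + 1) (W : ι → AffineSubspace ℝ H)
    [∀ i, FiniteDimensional ℝ (W i).direction]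
    (hW : ∀ i, Module.finrank ℝ (W i).direction ≤ d - 1) :
    ∃ z ∈ msupport μ, dist z x ≤ t / 2 ∧ ∀ i, ∀ w ∈ W i, escapeRadius d Cμ * t < dist z w := by
  set ρ := escapeRadius d Cμ
  set tubes := ⋃ i, closedBall x t ∩ cthickening (ρ * t) (W i)
  have htubes : μ tubes < ENNReal.ofReal (Cμ⁻¹ * (t / 2) ^ d) := by
    calc μ tubes ≤ ∑ i, μ (closedBall x t ∩ cthickening (ρ * t) (W i)) :=
          measure_iUnion_fintype_le _ _
      _ ≤ ∑ _i : ι, ENNReal.ofReal (5 ^ (d - 1) * 8 ^ d * Cμ * ρ * t ^ d) :=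
        Finset.sum_le_sum fun i _ => hreg.measure_closedBall_inter_cthickening_le hd x ht hdiam
          (escapeRadius_pos hreg.1) escapeRadius_le (W i) (hW i)
      _ ≤ ENNReal.ofReal ((d + 1) * (5 ^ (d - 1) * 8 ^ d * Cμ * ρ * t ^ d)) := by
        rw [Finset.sum_const, nsmul_eq_mul, Finset.card_univ,
          ENNReal.ofReal_mul (by positivity : (0 : ℝ) ≤ d + 1)]
        gcongr
        rw [← Nat.cast_add_one, ENNReal.ofReal_natCast]
        exact_mod_cast hι
      _ < _ := (ENNReal.ofReal_lt_ofReal_iff (by have := hreg.1; positivity)).2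
        (escapeRadius_mul_lt hreg.1 ht)
  obtain ⟨z, ⟨hzx, hzT⟩, hzμ⟩ : (closedBall x (t / 2) \ tubes ∩ msupport μ).Nonempty := by
    by_contra! hempty
    have hsub : closedBall x (t / 2) ⊆ tubes ∪ (msupport μ)ᶜ := fun y hy => by
      by_contra hy'
      rw [Set.mem_union, not_or, Set.notMem_compl_iff] at hy'
      exact (Set.eq_empty_iff_forall_notMem.1 hempty) y ⟨⟨hy, hy'.1⟩, hy'.2⟩
    have hball := (hreg.2 x hx (t / 2) (by positivity)
      ((ENNReal.ofReal_le_ofReal (by linarith)).trans hdiam)).1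
    have := (hball.trans (measure_mono hsub)).trans (measure_union_le _ _)
    rw [measure_compl_msupport, add_zero] at this
    exact (htubes.trans_le this).false
  refine ⟨z, hzμ, hzx, fun i w hw => not_le.1 fun hzw => hzT ?_⟩
  exact Set.mem_iUnion.2 ⟨i, closedBall_subset_closedBall (by linarith) hzx,
    mem_cthickening_of_dist_le z w _ _ hw hzw⟩

end Escape

section Configuration

variable {H : Type*} [NormedAddCommGroup H] [NormedSpace ℝ H]

theorem finrank_direction_affineSpan_image_le {ι : Type*} (p : ι → H) (s : Finset ι) :
    Module.finrank ℝ (affineSpan ℝ (p '' s)).direction ≤ s.card - 1 := by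
  classical
  rw [direction_affineSpan]
  rcases s.eq_empty_or_nonempty with rfl | hs
  · rw [Finset.coe_empty, Set.image_empty, vectorSpan_empty, finrank_bot]
    exact Nat.zero_le _
  obtain ⟨n, hn⟩ : ∃ n, s.card = n + 1 := ⟨s.card - 1, by have := hs.card_pos; omega⟩
  rw [hn, Nat.add_sub_cancel, ← Finset.coe_image]
  exact finrank_vectorSpan_image_finset_le ℝ p s hn

theorem finrank_direction_affineSpan_preceding_le {n : ℕ} (p : Fin (n + 2) → H)
    {m j : Fin (n + 2)} (hjm : j ≠ m) :
    Module.finrank ℝ (affineSpan ℝ (p '' {l | l < m ∧ l ≠ j})).direction ≤ n - 1 := by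
  have hS : {l | l < m ∧ l ≠ j} = ↑(Finset.univ.filter fun l => l < m ∧ l ≠ j) := by
    ext; simp
  have hcard : (Finset.univ.filter fun l => l < m ∧ l ≠ j).card ≤ n :=
    calc _ ≤ (Finset.univ \ {m, j}).card :=
          Finset.card_le_card fun l hl => by
            simp only [Finset.mem_filter, Finset.mem_univ, true_and] at hl
            simp [hl.1.ne, hl.2]
      _ = n := by
        rw [Finset.card_univ_sdiff, Finset.card_pair hjm.symm, Fintype.card_fin]; rfl
  rw [hS]
  exact (finrank_direction_affineSpan_image_le p _).trans (by omega)

def IsFaceSeparated (r : ℝ) {N : ℕ} (p : Fin N → H) : Prop :=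
  ∀ m j : Fin N, j ≠ m → ∀ y ∈ affineSpan ℝ (p '' {l | l < m ∧ l ≠ j}), r ≤ dist (p m) y

theorem IsFaceSeparated.le_norm_sub {r : ℝ} {n : ℕ} {p : Fin (n + 2) → H}
    (hp : IsFaceSeparated r p) (j : Fin (n + 2)) (a : Fin n) :
    ∀ w ∈ Submodule.span ℝ
        ((fun b : Fin n => p (j.succAbove b.succ) - p (j.succAbove 0)) '' Set.Iio a),
      r ≤ ‖p (j.succAbove a.succ) - p (j.succAbove 0) - w‖ := by
  intro w hw
  set S : Set (Fin (n + 2)) := {l | l < j.succAbove a.succ ∧ l ≠ j}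
  have hmem : ∀ b : Fin (n + 1), b < a.succ → j.succAbove b ∈ S := fun b hb =>
    ⟨Fin.strictMono_succAbove j hb, Fin.succAbove_ne j b⟩
  have h0 : p (j.succAbove 0) ∈ affineSpan ℝ (p '' S) :=
    subset_affineSpan ℝ _ ⟨_, hmem 0 a.succ_pos, rfl⟩
  have hspan : Submodule.span ℝ
      ((fun b : Fin n => p (j.succAbove b.succ) - p (j.succAbove 0)) '' Set.Iio a) ≤
      (affineSpan ℝ (p '' S)).direction := by
    rw [Submodule.span_le]
    rintro _ ⟨b, hb, rfl⟩
    exact AffineSubspace.vsub_mem_direction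
      (subset_affineSpan ℝ _ ⟨_, hmem b.succ (Fin.succ_lt_succ_iff.2 hb), rfl⟩) h0
  have := hp _ j (Fin.succAbove_ne j a.succ).symm _
    (AffineSubspace.vadd_mem_of_mem_direction (hspan hw) h0)
  rwa [vadd_eq_add, dist_eq_norm, sub_add_eq_sub_sub_swap] at this

variable [MeasurableSpace H] [SecondCountableTopology H] {μ : Measure H} {d : ℕ} {Cμ : ℝ}

theorem IsDRegular.exists_isFaceSeparated (hd : 1 ≤ d) (hreg : IsDRegular d Cμ μ) {x : H}
    (hx : x ∈ msupport μ) {t : ℝ} (ht : 0 < t)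
    (hdiam : ENNReal.ofReal t ≤ ediam (msupport μ)) :
    ∃ p : Fin (d + 2) → H, (∀ i, p i ∈ msupport μ ∧ dist (p i) x ≤ t / 2) ∧
      IsFaceSeparated (escapeRadius d Cμ * t) p := by
  let Good (p : Fin (d + 2) → H) (m : Fin (d + 2)) : Prop :=
    p m ∈ msupport μ ∧ dist (p m) x ≤ t / 2 ∧ ∀ j, j ≠ m →
      ∀ y ∈ affineSpan ℝ (p '' {l | l < m ∧ l ≠ j}), escapeRadius d Cμ * t ≤ dist (p m) y
  suffices ∀ k ≤ d + 2, ∃ p : Fin (d + 2) → H, ∀ m : Fin (d + 2), (m : ℕ) < k → Good p m by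
    obtain ⟨p, hp⟩ := this (d + 2) le_rfl
    exact ⟨p, fun i => ⟨(hp i i.2).1, (hp i i.2).2.1⟩, fun m => (hp m m.2).2.2⟩
  intro k
  induction k with
  | zero => exact fun _ => ⟨fun _ => x, fun m hm => absurd hm (Nat.not_lt_zero _)⟩
  | succ k ih =>
    intro hk
    obtain ⟨p, hp⟩ := ih (by omega)
    set m : Fin (d + 2) := ⟨k, hk⟩
    obtain ⟨z, hzμ, hzx, hzfar⟩ := hreg.exists_mem_msupport_forall_lt_dist hd hx ht hdiam
      (ι := {j // j ≠ m}) (by simp) (fun j => affineSpan ℝ (p '' {l | l < m ∧ l ≠ j}))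
      fun j => finrank_direction_affineSpan_preceding_le p j.2
    have hagree : ∀ m' ≤ m, ∀ j, Function.update p m z '' {l | l < m' ∧ l ≠ j} =
        p '' {l | l < m' ∧ l ≠ j} := fun m' hm' j =>
      Set.image_congr fun l hl => Function.update_of_ne (hl.1.trans_le hm').ne _ _
    refine ⟨Function.update p m z, fun m' hm' => ?_⟩
    rcases (Nat.lt_succ_iff.1 hm').lt_or_eq with hlt | heq
    · have hm'm : m' < m := hlt
      obtain ⟨h1, h2, h3⟩ := hp m' hlt
      simp only [Good, Function.update_of_ne hm'm.ne]
      exact ⟨h1, h2, fun j hj => hagree m' hm'm.le j ▸ h3 j hj⟩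
    · obtain rfl : m' = m := Fin.ext heq
      simp only [Good, Function.update_self]
      exact ⟨hzμ, hzx, fun j hj y hy => (hzfar ⟨j, hj⟩ y (hagree m le_rfl j ▸ hy)).le⟩

end Configuration

section Gram

open Matrix InnerProductSpace

variable {E : Type*} [NormedAddCommGroup E] [InnerProductSpace ℝ E]

theorem Matrix.det_gram_eq_prod_norm_gramSchmidt_sq {n : ℕ} (v : Fin n → E) :
    (gram ℝ v).det = ∏ i, ‖gramSchmidt ℝ v i‖ ^ 2 := by
  set u := gramSchmidt ℝ v
  -- `v = T u` with `T` unit lower triangular, and `gram ℝ u` is diagonal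
  let T : Matrix (Fin n) (Fin n) ℝ := of fun i j =>
    if j < i then ⟪u j, v i⟫ / ‖u j‖ ^ 2 else if i = j then 1 else 0
  have hv : ∀ i, v i = ∑ j, T i j • u j := by
    intro i
    have hsplit : ∀ j, T i j • u j =
        (if j < i then (⟪u j, v i⟫ / ‖u j‖ ^ 2) • u j else 0) + if i = j then u j else 0 := by
      intro j
      rcases lt_trichotomy j i with h | rfl | h
      · simp [T, h, h.ne']
      · simp [T]
      · simp [T, h.not_gt, h.ne]
    rw [Finset.sum_congr rfl fun j _ => hsplit j, Finset.sum_add_distrib, Finset.sum_ite_eq,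
      ← Finset.sum_filter, add_comm]
    simpa [Finset.filter_gt_eq_Iio] using gramSchmidt_def'' ℝ v i
  have hgram : gram ℝ v = T * gram ℝ u * Tᵀ := by
    ext i j
    simp only [gram_apply, mul_apply, transpose_apply]
    rw [hv i, hv j]
    simp only [sum_inner, inner_sum, real_inner_smul_left, real_inner_smul_right,
      Finset.sum_mul]
    exact Finset.sum_congr rfl fun _ _ => Finset.sum_congr rfl fun _ _ => by ring
  have hu : gram ℝ u = diagonal fun i => ‖u i‖ ^ 2 := by
    ext i j
    by_cases h : i = j
    · subst h; simp
    · simpa [h] using gramSchmidt_orthogonal ℝ v h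
  have hT : T.det = 1 := by
    rw [det_of_isLowerTriangular T ?_]
    · simp [T]
    · intro i j (hij : i < j)
      simp [T, hij.not_gt, hij.ne]
  rw [hgram, det_mul, det_mul, det_transpose, hT, hu, det_diagonal]
  ring

theorem InnerProductSpace.sub_gramSchmidt_mem_span {ι : Type*} [LinearOrder ι]
    [LocallyFiniteOrderBot ι] [WellFoundedLT ι] (v : ι → E) (i : ι) :
    v i - gramSchmidt ℝ v i ∈ Submodule.span ℝ (v '' Set.Iio i) := by
  rw [← span_gramSchmidt_Iio]
  nth_rw 1 [gramSchmidt_def'' ℝ v i]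
  rw [add_sub_cancel_left]
  exact Submodule.sum_mem _ fun j hj =>
    Submodule.smul_mem _ _ (Submodule.subset_span ⟨j, Finset.mem_Iio.1 hj, rfl⟩)

theorem Matrix.pow_le_det_gram {n : ℕ} {v : Fin n → E} {r : ℝ} (hr : 0 ≤ r)
    (hv : ∀ i, ∀ w ∈ Submodule.span ℝ (v '' Set.Iio i), r ≤ ‖v i - w‖) :
    r ^ (2 * n) ≤ (gram ℝ v).det := by
  rw [det_gram_eq_prod_norm_gramSchmidt_sq, pow_mul]
  calc (r ^ 2) ^ n = ∏ _i : Fin n, r ^ 2 := by simp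
    _ ≤ ∏ i, ‖gramSchmidt ℝ v i‖ ^ 2 := by
      refine Finset.prod_le_prod (fun _ _ => by positivity) fun i _ => ?_
      have := hv i _ (sub_gramSchmidt_mem_span v i)
      rw [sub_sub_cancel] at this
      gcongr

theorem Matrix.abs_det_le_factorial_mul_prod_norm {n : ℕ} (A : Matrix (Fin n) (Fin n) ℝ) :
    |A.det| ≤ n ! * ∏ i, ‖A i‖ := by
  rw [det_apply]
  calc |∑ σ : Equiv.Perm (Fin n), Equiv.Perm.sign σ • ∏ i, A (σ i) i|
      ≤ ∑ σ : Equiv.Perm (Fin n), |∏ i, A (σ i) i| := by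
        refine (Finset.abs_sum_le_sum_abs _ _).trans_eq (Finset.sum_congr rfl fun σ _ => ?_)
        rcases Int.units_eq_one_or (Equiv.Perm.sign σ) with h | h <;> simp [h]
    _ ≤ ∑ σ : Equiv.Perm (Fin n), ∏ i, ‖A i‖ := by
        refine Finset.sum_le_sum fun σ _ => ?_
        rw [Finset.abs_prod, ← Equiv.prod_comp σ (fun i => ‖A i‖)]
        exact Finset.prod_le_prod (fun _ _ => abs_nonneg _) fun i _ =>
          norm_le_pi_norm (A (σ i)) i
    _ = n ! * ∏ i, ‖A i‖ := by
        rw [Finset.sum_const, Finset.card_univ, Fintype.card_perm, Fintype.card_fin,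
          nsmul_eq_mul]

theorem Matrix.abs_det_sub_det_le {n : ℕ} {A B : Matrix (Fin n) (Fin n) ℝ} {M ε : ℝ}
    (hM : 0 ≤ M) (hε : 0 ≤ ε) (hA : ∀ i j, |A i j| ≤ M) (hB : ∀ i j, |B i j| ≤ M)
    (hAB : ∀ i j, |A i j - B i j| ≤ ε) :
    |A.det - B.det| ≤ n ! * n * M ^ (n - 1) * ε := by
  have hnorm : ∀ {c : ℝ} (C : Fin n → Fin n → ℝ), 0 ≤ c → (∀ i j, |C i j| ≤ c) → ‖C‖ ≤ c :=
    fun C hc hC => (pi_norm_le_iff_of_nonneg hc).2 fun i =>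
      (pi_norm_le_iff_of_nonneg hc).2 fun j => (Real.norm_eq_abs _).trans_le (hC i j)
  have := (detRowAlternating : (Fin n → ℝ) [⋀^Fin n]→ₗ[ℝ] ℝ).toMultilinearMap
    |>.norm_image_sub_le_of_bound (by positivity : (0 : ℝ) ≤ n !)
      (fun C => abs_det_le_factorial_mul_prod_norm (of C)) A B
  rw [Real.norm_eq_abs, Fintype.card_fin] at this
  refine this.trans ?_
  gcongr
  · exact le_max_of_le_left (norm_nonneg _)
  · exact max_le (hnorm A hM hA) (hnorm B hM hB)
  · exact hnorm (A - B) hε hAB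

theorem Matrix.abs_det_gram_sub_det_gram_le {n : ℕ} {v w : Fin n → E} {R ε : ℝ} (hR : 0 ≤ R)
    (hε : 0 ≤ ε) (hv : ∀ i, ‖v i‖ ≤ R) (hw : ∀ i, ‖w i‖ ≤ R) (hvw : ∀ i, ‖v i - w i‖ ≤ ε) :
    |(gram ℝ v).det - (gram ℝ w).det| ≤ n ! * n * (R ^ 2) ^ (n - 1) * (2 * R * ε) := by
  have hbound : ∀ u : Fin n → E, (∀ i, ‖u i‖ ≤ R) → ∀ i j, |gram ℝ u i j| ≤ R ^ 2 :=
    fun u hu i j => (abs_real_inner_le_norm _ _).trans (by rw [sq]; gcongr <;> apply hu)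
  refine abs_det_sub_det_le (by positivity) (by positivity) (hbound v hv) (hbound w hw)
    fun i j => ?_
  have hsplit : gram ℝ v i j - gram ℝ w i j = ⟪v i - w i, v j⟫ + ⟪w i, v j - w j⟫ := by
    simp only [gram_apply, inner_sub_left, inner_sub_right]; ring
  rw [hsplit]
  calc |⟪v i - w i, v j⟫ + ⟪w i, v j - w j⟫| ≤ ‖v i - w i‖ * ‖v j‖ + ‖w i‖ * ‖v j - w j‖ :=
        (abs_add_le _ _).trans
          (add_le_add (abs_real_inner_le_norm _ _) (abs_real_inner_le_norm _ _))
    _ ≤ ε * R + R * ε := by gcongr <;> simp [hv, hw, hvw]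
    _ = 2 * R * ε := by ring

end Gram

section Stability

open Matrix

def stabilityRadius (n : ℕ) (ρ : ℝ) : ℝ := ρ ^ (2 * n) / (8 * (n + 1)! * 4 ^ n)

variable {n : ℕ} {ρ : ℝ}

theorem stabilityRadius_pos (hρ : 0 < ρ) : 0 < stabilityRadius n ρ := by
  unfold stabilityRadius; positivity

theorem stabilityRadius_le (hρ : 0 ≤ ρ) (hρ1 : ρ ≤ 1) : stabilityRadius n ρ ≤ 1 / 8 := by
  rw [stabilityRadius, div_le_iff₀ (by positivity)]
  have : (1 : ℝ) ≤ (n + 1)! := by exact_mod_cast (n + 1).factorial_pos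
  have : (1 : ℝ) ≤ 4 ^ n := one_le_pow₀ (by norm_num)
  nlinarith [pow_le_one₀ (n := 2 * n) hρ hρ1]

theorem stabilityRadius_mul_le {m : ℕ} (hρ : 0 ≤ ρ) {t : ℝ} (ht : 0 ≤ t) :
    (m + 1)! * (m + 1 : ℕ) * ((2 * t) ^ 2) ^ m *
        (2 * (2 * t) * (2 * (stabilityRadius (m + 1) ρ * t))) ≤
      (ρ * t) ^ (2 * (m + 1)) / 4 := by
  have hfac : ((m + 2)! : ℝ) = (m + 2) * (m + 1)! := by push_cast [Nat.factorial_succ]; ring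
  have hm : ((m : ℝ) + 1) / (m + 2) ≤ 1 := by rw [div_le_one (by positivity)]; linarith
  rw [stabilityRadius, hfac]
  calc _ = (ρ * t) ^ (2 * (m + 1)) / 4 * ((m + 1) / (m + 2)) := by
        field_simp; push_cast; ring
    _ ≤ (ρ * t) ^ (2 * (m + 1)) / 4 := mul_le_of_le_one_right (by positivity) hm

variable {E : Type*} [NormedAddCommGroup E] [InnerProductSpace ℝ E]

theorem le_simplexContent_of_dist_le (hn : 1 ≤ n) {p q : Fin (n + 1) → E} {x : E} {t : ℝ}
    (ht : 0 < t) (hρ : 0 < ρ) (hρ1 : ρ ≤ 1) (hp : ∀ i, dist (p i) x ≤ t / 2)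
    (hq : ∀ i, dist (q i) (p i) ≤ stabilityRadius n ρ * t)
    (hfar : ∀ a : Fin n, ∀ w ∈ Submodule.span ℝ ((fun b : Fin n => p b.succ - p 0) '' Set.Iio a),
      ρ * t ≤ ‖p a.succ - p 0 - w‖) :
    ρ ^ n / 2 * t ^ n ≤ simplexContent n q := by
  obtain ⟨m, rfl⟩ : ∃ m, n = m + 1 := ⟨n - 1, by omega⟩
  set δ := stabilityRadius (m + 1) ρ with hδ_def
  have hδ : 0 ≤ δ := (stabilityRadius_pos hρ).le
  have hδt : δ * t ≤ t / 2 := by nlinarith [stabilityRadius_le (n := m + 1) hρ.le hρ1]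
  have hq' : ∀ i, dist (q i) x ≤ t := fun i => by
    linarith [dist_triangle (q i) (p i) x, hq i, hp i]
  have hedge : ∀ y : Fin (m + 2) → E, (∀ i, dist (y i) x ≤ t) → ∀ b : Fin (m + 1),
      ‖y b.succ - y 0‖ ≤ 2 * t := fun y hy b => by
    rw [← dist_eq_norm]; linarith [dist_triangle_right (y b.succ) (y 0) x, hy b.succ, hy 0]
  have hdiff : ∀ b : Fin (m + 1), ‖(q b.succ - q 0) - (p b.succ - p 0)‖ ≤ 2 * (δ * t) :=
    fun b => by
      rw [sub_sub_sub_comm]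
      linarith [norm_sub_le (q b.succ - p b.succ) (q 0 - p 0), dist_eq_norm (q b.succ) (p b.succ),
        dist_eq_norm (q 0) (p 0), hq b.succ, hq 0]
  have hlow := pow_le_det_gram (v := fun b : Fin (m + 1) => p b.succ - p 0) (by positivity) hfar
  have hpert := abs_det_gram_sub_det_gram_le (by positivity) (by positivity)
    (hedge q hq') (hedge p fun i => (hp i).trans (by linarith)) hdiff
  rw [Nat.add_sub_cancel] at hpert
  have hconst := stabilityRadius_mul_le (m := m) hρ.le ht.le
  rw [← hδ_def] at hconst
  have hsq : (ρ ^ (m + 1) / 2 * t ^ (m + 1)) ^ 2 = (ρ * t) ^ (2 * (m + 1)) / 4 := by ring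
  refine Real.le_sqrt_of_sq_le (?_ : _ ≤ (gram ℝ fun b : Fin (m + 1) => q b.succ - q 0).det)
  linarith [(abs_le.1 hpert).1, pow_nonneg (mul_nonneg hρ.le ht.le) (2 * (m + 1))]

end Stability

theorem d_separation_of_regular_measures_general {H : Type*} [NormedAddCommGroup H]
    [InnerProductSpace ℝ H] [SecondCountableTopology H] [MeasurableSpace H]
    (d : ℕ) (hd : 1 ≤ d) (Cμ : ℝ) (μ : Measure H) (hreg : IsDRegular d Cμ μ) :
    ∃ δ ω : ℝ, 0 < δ ∧ δ < 1 ∧ 0 < ω ∧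
      ∀ x ∈ msupport μ, ∀ t : ℝ, 0 < t →
        ENNReal.ofReal t ≤ EMetric.diam (msupport μ) →
          ∃ p : Fin (d + 2) → H,
            (∀ i, p i ∈ msupport μ) ∧
            (∀ i, closedBall (p i) (δ * t) ⊆ closedBall x t) ∧
            ∀ q : Fin (d + 2) → H, (∀ i, q i ∈ closedBall (p i) (δ * t)) →
              ∀ j : Fin (d + 2), ω * t ^ d ≤ simplexContent d (q ∘ j.succAbove) := by
  set ρ := escapeRadius d Cμ
  have hρ : 0 < ρ := escapeRadius_pos hreg.1
  have hρ1 : ρ ≤ 1 := escapeRadius_le.trans (by norm_num)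
  have hδ : stabilityRadius d ρ ≤ 1 / 8 := stabilityRadius_le hρ.le hρ1
  refine ⟨stabilityRadius d ρ, ρ ^ d / 2, stabilityRadius_pos hρ, by linarith, by positivity,
    fun x hx t ht hdiam => ?_⟩
  obtain ⟨p, hp, hsep⟩ := hreg.exists_isFaceSeparated hd hx ht hdiam
  refine ⟨p, fun i => (hp i).1, fun i => closedBall_subset_closedBall' ?_, fun q hq j => ?_⟩
  · nlinarith [(hp i).2]
  · exact le_simplexContent_of_dist_le hd ht hρ hρ1 (fun i => (hp _).2) (fun i => hq _)
      (hsep.le_norm_sub j)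

/-- d-separation of d-regular measures: there are δ_μ ∈ (0,1) and ω_μ > 0 (depending only on
d, Cμ) such that every ball B(x,t) centered on supp μ with 0 < t ≤ diam supp μ contains
d+2 balls B(xᵢ, δ_μ t) centered on supp μ, any transversal of which has all its d-dimensional
faces of content at least ω_μ·t^d. -/
theorem d_separation_of_regular_measures {H : Type*} [NormedAddCommGroup H]
    [InnerProductSpace ℝ H] [CompleteSpace H] [SecondCountableTopology H]
    [MeasurableSpace H] [BorelSpace H]
    (d : ℕ) (hd : 1 ≤ d) (hdim : (d : Cardinal) < Module.rank ℝ H)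
    (Cμ : ℝ) (μ : Measure H) (hreg : IsDRegular d Cμ μ) :
    ∃ δ ω : ℝ, 0 < δ ∧ δ < 1 ∧ 0 < ω ∧
      ∀ x ∈ msupport μ, ∀ t : ℝ, 0 < t →
        ENNReal.ofReal t ≤ EMetric.diam (msupport μ) →
          ∃ p : Fin (d + 2) → H,
            (∀ i, p i ∈ msupport μ) ∧
            (∀ i, closedBall (p i) (δ * t) ⊆ closedBall x t) ∧
            ∀ q : Fin (d + 2) → H, (∀ i, q i ∈ closedBall (p i) (δ * t)) →
              ∀ j : Fin (d + 2), ω * t ^ d ≤ simplexContent d (q ∘ j.succAbove) :=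
  d_separation_of_regular_measures_general d hd Cμ μ hreg
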